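/- arXiv:1609.05647 — 3 statements merged into one kernel-verified Lean document; each statement's English description precedes it below -/
import Mathlib

section
/- In the definition of R_{P,u₀}, condition (2) does not depend on the choice of local section: if f satisfies |f([u₀gh, x']) − f([u₀h, x'])| < ε for all g ∈ V, h ∈ G, x ∈ U with respect to one continuous section x ↦ x' of p over U, then the same inequality (with the same V) holds with respect to any other continuous section x ↦ x'' of p over U. -/
/-- The diagonal equivalence relation on `P × P`. -/
def gaugeRel {G P : Type*} (act : P → G → P) : (P × P) → (P × P) → Prop :=
  fun a b => ∃ g : G, b.1 = act a.1 g ∧ b.2 = act a.2 g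

theorem gaugeRel_mk_act_act {G P : Type*} [Group G] {act : P → G → P}
    (hact_mul : ∀ u g h, act (act u g) h = act u (g * h)) (u v : P) (h k : G) :
    Quot.mk (gaugeRel act) (act u h, act v k) = Quot.mk (gaugeRel act) (act u (h * k⁻¹), v) :=
  Quot.sound ⟨k, by rw [hact_mul, inv_mul_cancel_right], rfl⟩ |>.symm

theorem ruc_condition_section_independent_general {G P X : Type*} [Group G]
    (act : P → G → P) (p : P → X)
    (hact_mul : ∀ u g h, act (act u g) h = act u (g * h))
    (hfibtrans : ∀ u v, p u = p v → ∃ g, act u g = v)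
    (u₀ : P) (U : Set X)
    (σ₁ σ₂ : X → P)
    (hpσ₁ : ∀ x ∈ U, p (σ₁ x) = x) (hpσ₂ : ∀ x ∈ U, p (σ₂ x) = x)
    (f : Quot (gaugeRel act) → ℂ)
    (ε : ℝ) (V : Set G)
    (h1 : ∀ g ∈ V, ∀ h : G, ∀ x ∈ U,
      ‖f (Quot.mk (gaugeRel act) (act u₀ (g * h), σ₁ x))
        - f (Quot.mk (gaugeRel act) (act u₀ h, σ₁ x))‖ < ε) :
    ∀ g ∈ V, ∀ h : G, ∀ x ∈ U,
      ‖f (Quot.mk (gaugeRel act) (act u₀ (g * h), σ₂ x))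
        - f (Quot.mk (gaugeRel act) (act u₀ h, σ₂ x))‖ < ε := by
  intro g hg h x hx
  obtain ⟨k, hk⟩ := hfibtrans (σ₁ x) (σ₂ x) (by rw [hpσ₁ x hx, hpσ₂ x hx])
  have hmk : ∀ h' : G, Quot.mk (gaugeRel act) (act u₀ h', σ₂ x)
      = Quot.mk (gaugeRel act) (act u₀ (h' * k⁻¹), σ₁ x) := by
    intro h'
    rw [← hk]
    exact gaugeRel_mk_act_act hact_mul u₀ (σ₁ x) h' k
  -- The change of section is absorbed into `h`, so the same `V` works.
  simpa only [hmk, mul_assoc] using h1 g hg (h * k⁻¹) x hx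

/-- In the definition of `R_{P,u₀}`, condition (2) does not depend on the choice of
local section: if `f` satisfies `|f([u₀gh, x']) − f([u₀h, x'])| < ε` for all `g ∈ V`,
`h ∈ G`, `x ∈ U` with respect to one continuous section `x ↦ x'` of `p` over `U`, then
the same inequality (with the same `V`) holds with respect to any other continuous
section `x ↦ x''` of `p` over `U`. -/
theorem ruc_condition_section_independent {G P X : Type*} [Group G]
    [TopologicalSpace G] [IsTopologicalGroup G] [TopologicalSpace P] [TopologicalSpace X]
    (act : P → G → P) (p : P → X)
    (hact_one : ∀ u, act u 1 = u)
    (hact_mul : ∀ u g h, act (act u g) h = act u (g * h))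
    (hp : ∀ u g, p (act u g) = p u)
    (hfree : ∀ u g, act u g = u → g = 1)
    (hfibtrans : ∀ u v, p u = p v → ∃ g, act u g = v)
    (u₀ : P) (U : Set X)
    (σ₁ σ₂ : X → P)
    (hσ₁c : ContinuousOn σ₁ U) (hσ₂c : ContinuousOn σ₂ U)
    (hpσ₁ : ∀ x ∈ U, p (σ₁ x) = x) (hpσ₂ : ∀ x ∈ U, p (σ₂ x) = x)
    (f : Quot (gaugeRel act) → ℂ)
    (ε : ℝ) (hε : 0 < ε) (V : Set G) (hV : V ∈ nhds (1 : G))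
    (h1 : ∀ g ∈ V, ∀ h : G, ∀ x ∈ U,
      ‖f (Quot.mk (gaugeRel act) (act u₀ (g * h), σ₁ x))
        - f (Quot.mk (gaugeRel act) (act u₀ h, σ₁ x))‖ < ε) :
    ∀ g ∈ V, ∀ h : G, ∀ x ∈ U,
      ‖f (Quot.mk (gaugeRel act) (act u₀ (g * h), σ₂ x))
        - f (Quot.mk (gaugeRel act) (act u₀ h, σ₂ x))‖ < ε :=
  ruc_condition_section_independent_general act p hact_mul hfibtrans u₀ U σ₁ σ₂ hpσ₁ hpσ₂ f ε V h1
end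

section
/- Any two minimal G₁-subflows of S(P) are isomorphic as G₁-flows: if M and M' are minimal closed G₁-invariant subsets of S(P), then there exists a G₁-equivariant homeomorphism M → M'. -/
/-- A (transitive-style) topological groupoid presented by its object space `G₀`,
arrow space `G₁` and structure maps, following the convention of the paper:
`s(gh) = s(g)` and `t(gh) = t(h)`. -/
structure TopGroupoid (G₀ G₁ : Type*) [TopologicalSpace G₀] [TopologicalSpace G₁] where
  s : G₁ → G₀
  t : G₁ → G₀
  comp : (g h : G₁) → t g = s h → G₁
  unit : G₀ → G₁
  inv : G₁ → G₁
  s_comp : ∀ g h hgh, s (comp g h hgh) = s g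
  t_comp : ∀ g h hgh, t (comp g h hgh) = t h
  s_unit : ∀ x, s (unit x) = x
  t_unit : ∀ x, t (unit x) = x
  unit_comp : ∀ g (h : t (unit (s g)) = s g), comp (unit (s g)) g h = g
  comp_unit : ∀ g (h : t g = s (unit (t g))), comp g (unit (t g)) h = g
  s_inv : ∀ g, s (inv g) = t g
  t_inv : ∀ g, t (inv g) = s g
  comp_inv : ∀ g (h : t g = s (inv g)), comp g (inv g) h = unit (s g)
  inv_comp : ∀ g (h : t (inv g) = s g), comp (inv g) g h = unit (t g)
  assoc : ∀ g h k (hgh : t g = s h) (hhk : t h = s k)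
    (h1 : t (comp g h hgh) = s k) (h2 : t g = s (comp h k hhk)),
    comp (comp g h hgh) k h1 = comp g (comp h k hhk) h2
  cont_s : Continuous s
  cont_t : Continuous t
  cont_unit : Continuous unit
  cont_inv : Continuous inv
  cont_comp : Continuous fun q : {q : G₁ × G₁ // t q.1 = s q.2} => comp q.1.1 q.1.2 q.2

/-- A topological groupoid is locally trivial if every `x ∈ G₀` has an open
neighborhood `U` with a continuous section `τ : U → G₁` of the target map `t`
such that `s ∘ τ` is the constant map `x`. -/
def TopGroupoid.LocallyTrivial {G₀ G₁ : Type*} [TopologicalSpace G₀] [TopologicalSpace G₁]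
    (𝒢 : TopGroupoid G₀ G₁) : Prop :=
  ∀ x : G₀, ∃ U : Set G₀, IsOpen U ∧ x ∈ U ∧
    ∃ τ : G₀ → G₁, ContinuousOn τ U ∧ ∀ y ∈ U, 𝒢.t (τ y) = y ∧ 𝒢.s (τ y) = x

/-- A groupoid is transitive if there is an arrow between any two objects. -/
def TopGroupoid.Transitive {G₀ G₁ : Type*} [TopologicalSpace G₀] [TopologicalSpace G₁]
    (𝒢 : TopGroupoid G₀ G₁) : Prop :=
  ∀ x y : G₀, ∃ g : G₁, 𝒢.s g = x ∧ 𝒢.t g = y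

/-- A map `l : Y → Y` is `G₁`-equivariant for a groupoid action with anchor `ρ` if it
preserves the anchor and commutes with the action of every arrow. -/
def IsEquivMap {G₀ G₁ Y : Type*} [TopologicalSpace G₀] [TopologicalSpace G₁]
    [TopologicalSpace Y] (𝒢 : TopGroupoid G₀ G₁) (ρ : Y → G₀)
    (act : (y : Y) → (g : G₁) → 𝒢.s g = ρ y → Y) (l : Y → Y) : Prop :=
  (∀ z, ρ (l z) = ρ z) ∧
  ∀ (z : Y) (g : G₁) (hg : 𝒢.s g = ρ z) (hg' : 𝒢.s g = ρ (l z)),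
    l (act z g hg) = act (l z) g hg'

/-- Any two minimal `G₁`-subflows of `S(P)` are isomorphic as `G₁`-flows: if `M` and
`M'` are minimal closed `G₁`-invariant subsets of `S(P)`, then there is a
`G₁`-equivariant homeomorphism `M → M'`.  The hypotheses encode the structure of
`S(P)`: a continuous groupoid action with proper anchor `ρ`, a basepoint `u₀` over
`x₀` with dense orbit, the universal property (unique continuous equivariant
self-maps `l_y` prescribed at `u₀`), and continuity of `y ↦ l_y(z)` on the fiber. -/
theorem minimal_subflows_isomorphic {G₀ G₁ SP : Type*}
    [TopologicalSpace G₀] [TopologicalSpace G₁] [TopologicalSpace SP] [T2Space SP]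
    (𝒢 : TopGroupoid G₀ G₁) (htr : 𝒢.Transitive)
    (ρ : SP → G₀) (hρc : Continuous ρ) (hρproper : IsProperMap ρ)
    (act : (y : SP) → (g : G₁) → 𝒢.s g = ρ y → SP)
    (hρa : ∀ y g hg, ρ (act y g hg) = 𝒢.t g)
    (hacomp : ∀ (y : SP) (g : G₁) (hg : 𝒢.s g = ρ y) (h : G₁)
      (hh : 𝒢.t g = 𝒢.s h) (hh' : 𝒢.s h = ρ (act y g hg))
      (hgh : 𝒢.s (𝒢.comp g h hh) = ρ y),
      act (act y g hg) h hh' = act y (𝒢.comp g h hh) hgh)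
    (haunit : ∀ (y : SP) (h : 𝒢.s (𝒢.unit (ρ y)) = ρ y),
      act y (𝒢.unit (ρ y)) h = y)
    (hacont : Continuous fun q : {q : SP × G₁ // 𝒢.s q.2 = ρ q.1} =>
      act q.1.1 q.1.2 q.2)
    (x₀ : G₀) (u₀ : SP) (hu₀ : ρ u₀ = x₀)
    (hdense : Dense {z : SP | ∃ (g : G₁) (hg : 𝒢.s g = ρ u₀), act u₀ g hg = z})
    (huniv : ∀ y : SP, ρ y = x₀ →
      ∃! l : SP → SP, Continuous l ∧ IsEquivMap 𝒢 ρ act l ∧ l u₀ = y)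
    (hrightcont : ∀ (z : SP), ρ z = x₀ →
      ∀ L : {y : SP // ρ y = x₀} → SP → SP,
        (∀ y, Continuous (L y) ∧ IsEquivMap 𝒢 ρ act (L y) ∧ L y u₀ = y.1) →
        Continuous fun y : {y : SP // ρ y = x₀} => L y z)
    (M M' : Set SP)
    (hMc : IsClosed M) (hMne : M.Nonempty)
    (hMinv : ∀ z ∈ M, ∀ (g : G₁) (hg : 𝒢.s g = ρ z), act z g hg ∈ M)
    (hMmin : ∀ N ⊆ M, N.Nonempty → IsClosed N →
      (∀ z ∈ N, ∀ (g : G₁) (hg : 𝒢.s g = ρ z), act z g hg ∈ N) → N = M)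
    (hM'c : IsClosed M') (hM'ne : M'.Nonempty)
    (hM'inv : ∀ z ∈ M', ∀ (g : G₁) (hg : 𝒢.s g = ρ z), act z g hg ∈ M')
    (hM'min : ∀ N ⊆ M', N.Nonempty → IsClosed N →
      (∀ z ∈ N, ∀ (g : G₁) (hg : 𝒢.s g = ρ z), act z g hg ∈ N) → N = M') :
    ∃ φ : M ≃ₜ M',
      ∀ (z : M) (g : G₁) (hg : 𝒢.s g = ρ z.1)
        (hg' : 𝒢.s g = ρ (φ z).1),
        (φ ⟨act z.1 g hg, hMinv z.1 z.2 g hg⟩).1 = act (φ z).1 g hg' := by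
  classical
  choose L hL using huniv
  -- equivariance components
  have hE : ∀ y (hy : ρ y = x₀), (∀ z, ρ (L y hy z) = ρ z) ∧
      ∀ (z : SP) (g : G₁) (hg : 𝒢.s g = ρ z) (hg' : 𝒢.s g = ρ (L y hy z)),
        L y hy (act z g hg) = act (L y hy z) g hg' := fun y hy => (hL y hy).1.2.1
  have hLu : ∀ y (hy : ρ y = x₀) (l' : SP → SP),
      (Continuous l' ∧ IsEquivMap 𝒢 ρ act l' ∧ l' u₀ = y) → l' = L y hy :=
    fun y hy => (hL y hy).2
  have act_congr : ∀ {y y' : SP} (_ : y = y') (g : G₁) (hg : 𝒢.s g = ρ y)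
      (hg' : 𝒢.s g = ρ y'), act y g hg = act y' g hg' := by
    intro y y' h g hg hg'; subst h; rfl
  have Lcongr : ∀ {a a' : SP} (_ : a = a') (ha : ρ a = x₀) (ha' : ρ a' = x₀) (z : SP),
      L a ha z = L a' ha' z := by
    intro a a' h ha ha' z; subst h; rfl
  -- images of invariant closed sets
  have hLmem : ∀ (N : Set SP), IsClosed N →
      (∀ z ∈ N, ∀ (g : G₁) (hg : 𝒢.s g = ρ z), act z g hg ∈ N) →
      ∀ y (hy : ρ y = x₀), y ∈ N → ∀ z, L y hy z ∈ N := by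
    intro N hNc hNinv y hy hyN z
    set S : Set SP := L y hy ⁻¹' N with hSdef
    have hSc : IsClosed S := hNc.preimage (hL y hy).1.1
    have hDS : {z : SP | ∃ (g : G₁) (hg : 𝒢.s g = ρ u₀), act u₀ g hg = z} ⊆ S := by
      rintro d ⟨g, hg, rfl⟩
      have hg2 : 𝒢.s g = ρ (L y hy u₀) := by rw [(hE y hy).1]; exact hg
      show L y hy (act u₀ g hg) ∈ N
      rw [(hE y hy).2 u₀ g hg hg2]
      have hyu : L y hy u₀ = y := (hL y hy).1.2.2
      rw [act_congr hyu g hg2 (by rw [← hyu]; exact hg2)]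
      exact hNinv y hyN g _
    have hSuniv : S = Set.univ := by
      rw [← hSc.closure_eq]
      exact (Dense.mono hDS hdense).closure_eq
    exact (Set.eq_univ_iff_forall.mp hSuniv z)
  -- composition law
  have hLcomp : ∀ a (ha : ρ a = x₀) b (hb : ρ b = x₀) (hab : ρ (L a ha b) = x₀) (z : SP),
      L a ha (L b hb z) = L (L a ha b) hab z := by
    intro a ha b hb hab z
    have h1 : (fun w => L a ha (L b hb w)) = L (L a ha b) hab := by
      apply hLu _ hab
      refine ⟨(hL a ha).1.1.comp (hL b hb).1.1, ⟨?_, ?_⟩, ?_⟩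
      · intro w; show ρ (L a ha (L b hb w)) = ρ w; rw [(hE a ha).1, (hE b hb).1]
      · intro w g hg hg'
        show L a ha (L b hb (act w g hg)) = act (L a ha (L b hb w)) g hg'
        rw [(hE b hb).2 w g hg (by rw [(hE b hb).1]; exact hg)]
        exact (hE a ha).2 _ g _ hg'
      · show L a ha (L b hb u₀) = L a ha b; rw [(hL b hb).1.2.2]
    exact congrFun h1 z
  -- fibers over x₀ inside invariant sets are nonempty
  have hfib : ∀ (N : Set SP), N.Nonempty →
      (∀ z ∈ N, ∀ (g : G₁) (hg : 𝒢.s g = ρ z), act z g hg ∈ N) →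
      ∃ z, z ∈ N ∧ ρ z = x₀ := by
    intro N hNne hNinv
    obtain ⟨z, hz⟩ := hNne
    obtain ⟨g, hgs, hgt⟩ := htr (ρ z) x₀
    exact ⟨act z g hgs, hNinv z hz g hgs, by rw [hρa]; exact hgt⟩
  -- Ellis' idempotent lemma for compact multiplicatively closed subsets of the fiber
  have ellis : ∀ (K : Set SP), IsCompact K → K.Nonempty →
      (∀ a ∈ K, ρ a = x₀) →
      (∀ a, a ∈ K → ∀ b, b ∈ K → ∀ (ha : ρ a = x₀), L a ha b ∈ K) →
      ∃ v, ∃ (_ : v ∈ K) (hv : ρ v = x₀), L v hv v = v := by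
    intro K hKcomp hKne hKfib hKmul
    haveI : Nonempty K := hKne.to_subtype
    haveI : CompactSpace K := isCompact_iff_compactSpace.mp hKcomp
    letI : Semigroup K :=
      { mul := fun p q => ⟨L p.1 (hKfib p.1 p.2) q.1, hKmul p.1 p.2 q.1 q.2 _⟩
        mul_assoc := by
          intro p q r
          exact Subtype.ext
            ((hLcomp p.1 (hKfib p.1 p.2) q.1 (hKfib q.1 q.2)
              (hKfib _ (hKmul p.1 p.2 q.1 q.2 _)) r.1).symm) }
    have hcont : ∀ r : K, Continuous (· * r) := by
      intro r
      refine Continuous.subtype_mk ?_ _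
      have h1 := hrightcont r.1 (hKfib r.1 r.2) (fun y => L y.1 y.2)
        (fun y => (hL y.1 y.2).1)
      have h2 : Continuous fun p : K => (⟨p.1, hKfib p.1 p.2⟩ : {y : SP // ρ y = x₀}) :=
        Continuous.subtype_mk continuous_subtype_val _
      exact h1.comp h2
    obtain ⟨m, hm⟩ := exists_idempotent_of_compact_t2_of_continuous_mul_left hcont
    exact ⟨m.1, m.2, hKfib m.1 m.2, congrArg Subtype.val hm⟩
  -- idempotents act as the identity on the minimal set containing them
  have idlem : ∀ (N : Set SP), IsClosed N →
      (∀ z ∈ N, ∀ (g : G₁) (hg : 𝒢.s g = ρ z), act z g hg ∈ N) →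
      (∀ S ⊆ N, S.Nonempty → IsClosed S →
        (∀ z ∈ S, ∀ (g : G₁) (hg : 𝒢.s g = ρ z), act z g hg ∈ S) → S = N) →
      ∀ v (hv : ρ v = x₀), v ∈ N → L v hv v = v → ∀ z ∈ N, L v hv z = z := by
    intro N hNc hNinv hNmin v hv hvN hvid z hz
    set S : Set SP := {w | w ∈ N ∧ L v hv w = w} with hSdef
    have hSsub : S ⊆ N := fun w hw => hw.1
    have hSne : S.Nonempty := ⟨v, hvN, hvid⟩
    have hSc : IsClosed S := hNc.inter (isClosed_eq (hL v hv).1.1 continuous_id)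
    have hSinv : ∀ w ∈ S, ∀ (g : G₁) (hg : 𝒢.s g = ρ w), act w g hg ∈ S := by
      rintro w ⟨hwN, hwfix⟩ g hg
      refine ⟨hNinv w hwN g hg, ?_⟩
      rw [(hE v hv).2 w g hg (by rw [(hE v hv).1]; exact hg)]
      exact act_congr hwfix g _ hg
    have := hNmin S hSsub hSne hSc hSinv
    rw [← this] at hz
    exact hz.2
  -- the compact fiber
  have hfibcomp : IsCompact (ρ ⁻¹' {x₀}) := hρproper.isCompact_preimage isCompact_singleton
  -- first Ellis application : idempotent v₀ in M over x₀
  have hKM : IsCompact (M ∩ ρ ⁻¹' {x₀}) := hfibcomp.inter_left hMc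
  obtain ⟨v₀, hv₀K, hv₀, hv₀id⟩ := ellis (M ∩ ρ ⁻¹' {x₀}) hKM
    (by obtain ⟨z, hzM, hzρ⟩ := hfib M hMne hMinv; exact ⟨z, hzM, hzρ⟩)
    (fun a ha => ha.2)
    (by
      intro a haK b hbK ha
      exact ⟨hLmem M hMc hMinv a ha haK.1 b, by
        show ρ (L a ha b) = x₀; rw [(hE a ha).1]; exact hbK.2⟩)
  have hv₀M : v₀ ∈ M := hv₀K.1
  -- second Ellis application: the compact set K' = (M' ∩ fiber) * v₀
  set r : {y : SP // ρ y = x₀} → SP := fun y => L y.1 y.2 v₀ with hrdef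
  have hrcont : Continuous r := hrightcont v₀ hv₀ (fun y => L y.1 y.2) (fun y => (hL y.1 y.2).1)
  set B : Set {y : SP // ρ y = x₀} := Subtype.val ⁻¹' M' with hBdef
  have hBcomp : IsCompact B := by
    rw [Subtype.isCompact_iff]
    have : (Subtype.val '' B : Set SP) = {y : SP | ρ y = x₀} ∩ M' :=
      Subtype.image_preimage_coe _ _
    rw [this]
    exact hfibcomp.inter_right hM'c
  set K' : Set SP := r '' B with hK'def
  have hK'comp : IsCompact K' := hBcomp.image hrcont
  have hK'fib : ∀ a ∈ K', ρ a = x₀ := by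
    rintro a ⟨y, _, rfl⟩
    show ρ (L y.1 y.2 v₀) = x₀
    rw [(hE y.1 y.2).1]; exact hv₀
  have hK'M' : ∀ a ∈ K', a ∈ M' := by
    rintro a ⟨y, hy, rfl⟩
    exact hLmem M' hM'c hM'inv y.1 y.2 hy v₀
  have hK'stab : ∀ a ∈ K', ∀ (ha : ρ a = x₀), L a ha v₀ = a := by
    rintro a ⟨y, _, rfl⟩ ha
    calc L (L y.1 y.2 v₀) ha v₀ = L y.1 y.2 (L v₀ hv₀ v₀) :=
          (hLcomp y.1 y.2 v₀ hv₀ ha v₀).symm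
      _ = L y.1 y.2 v₀ := by rw [hv₀id]
  have hK'mul : ∀ a, a ∈ K' → ∀ b, b ∈ K' → ∀ (ha : ρ a = x₀), L a ha b ∈ K' := by
    intro a haK b hbK ha
    have hb : ρ b = x₀ := hK'fib b hbK
    have hab : ρ (L a ha b) = x₀ := by rw [(hE a ha).1]; exact hb
    refine ⟨⟨L a ha b, hab⟩, ?_, ?_⟩
    · show L a ha b ∈ M'
      exact hLmem M' hM'c hM'inv a ha (hK'M' a haK) b
    · show L (L a ha b) hab v₀ = L a ha b
      calc L (L a ha b) hab v₀ = L a ha (L b hb v₀) := (hLcomp a ha b hb hab v₀).symm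
        _ = L a ha b := by rw [hK'stab b hbK hb]
  have hK'ne : K'.Nonempty := by
    obtain ⟨z, hzM', hzρ⟩ := hfib M' hM'ne hM'inv
    exact ⟨r ⟨z, hzρ⟩, ⟨z, hzρ⟩, hzM', rfl⟩
  obtain ⟨q, hqK', hq, hqid⟩ := ellis K' hK'comp hK'ne hK'fib hK'mul
  have hqM' : q ∈ M' := hK'M' q hqK'
  have hqv₀ : L q hq v₀ = q := hK'stab q hqK' hq
  -- define v = v₀ * q
  set v : SP := L v₀ hv₀ q with hvdef
  have hv : ρ v = x₀ := by rw [hvdef, (hE v₀ hv₀).1]; exact hq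
  have hvM : v ∈ M := hLmem M hMc hMinv v₀ hv₀ hv₀M q
  -- algebraic identities
  have hqv : L q hq v = q := by
    calc L q hq v = L (L q hq v₀) (by rw [(hE q hq).1]; exact hv₀) q :=
          hLcomp q hq v₀ hv₀ _ q
      _ = L q hq q := Lcongr hqv₀ _ _ q
      _ = q := hqid
  have hvq : L v hv q = v := by
    calc L v hv q = L v₀ hv₀ (L q hq q) := (hLcomp v₀ hv₀ q hq hv q).symm
      _ = L v₀ hv₀ q := by rw [hqid]
  have hvv₀ : L v hv v₀ = v := by
    calc L v hv v₀ = L v₀ hv₀ (L q hq v₀) := (hLcomp v₀ hv₀ q hq hv v₀).symm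
      _ = L v₀ hv₀ q := by rw [hqv₀]
  have hvid : L v hv v = v := by
    calc L v hv v = L (L v hv v₀) (by rw [(hE v hv).1]; exact hv₀) q :=
          hLcomp v hv v₀ hv₀ _ q
      _ = L v hv q := Lcongr hvv₀ _ _ q
      _ = v := hvq
  -- idempotents act as identity
  have idM : ∀ z ∈ M, L v hv z = z := idlem M hMc hMinv hMmin v hv hvM hvid
  have idM' : ∀ z ∈ M', L q hq z = z := idlem M' hM'c hM'inv hM'min q hq hqM' hqid
  -- build the homeomorphism
  refine ⟨{ toFun := fun z => ⟨L q hq z.1, hLmem M' hM'c hM'inv q hq hqM' z.1⟩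
            invFun := fun z => ⟨L v hv z.1, hLmem M hMc hMinv v hv hvM z.1⟩
            left_inv := ?_
            right_inv := ?_
            continuous_toFun := ?_
            continuous_invFun := ?_ }, ?_⟩
  · intro z
    apply Subtype.ext
    show L v hv (L q hq z.1) = z.1
    calc L v hv (L q hq z.1) = L (L v hv q) (by rw [(hE v hv).1]; exact hq) z.1 :=
          hLcomp v hv q hq _ z.1
      _ = L v hv z.1 := Lcongr hvq _ _ z.1
      _ = z.1 := idM z.1 z.2
  · intro z
    apply Subtype.ext
    show L q hq (L v hv z.1) = z.1
    calc L q hq (L v hv z.1) = L (L q hq v) (by rw [(hE q hq).1]; exact hv) z.1 :=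
          hLcomp q hq v hv _ z.1
      _ = L q hq z.1 := Lcongr hqv _ _ z.1
      _ = z.1 := idM' z.1 z.2
  · exact Continuous.subtype_mk ((hL q hq).1.1.comp continuous_subtype_val) _
  · exact Continuous.subtype_mk ((hL v hv).1.1.comp continuous_subtype_val) _
  · intro z g hg hg'
    exact (hE q hq).2 z.1 g hg hg'
end

section
/- Let G be extremely amenable, 𝒢 = (G₀, G₁) a locally trivial transitive topological groupoid with isotropy groups isomorphic to G, and α : X ×_{ρ,s} G₁ → X a continuous right action with proper anchor map ρ : X → G₀. Then there exists a continuous 𝒢-invariant section σ : G₀ → X of ρ, i.e. ρ ∘ σ = id and σ(t(g)) = σ(s(g))•g for every g ∈ G₁. -/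
universe u

/-- A topological group `G` is extremely amenable if every continuous action of `G`
on a nonempty compact Hausdorff space has a fixed point. -/
def ExtremelyAmenable (G : Type*) [Group G] [TopologicalSpace G] : Prop :=
  ∀ (X : Type u) [TopologicalSpace X] [CompactSpace X] [T2Space X] [Nonempty X]
    (a : G → X → X), (Continuous fun q : G × X => a q.1 q.2) →
    (∀ x, a 1 x = x) → (∀ g h x, a (g * h) x = a g (a h x)) →
    ∃ x : X, ∀ g : G, a g x = x

/-!
The isotropy group at a point `x₀`, a copy of `G`, acts continuously on the compact fiber
`ρ⁻¹(x₀)`, so extreme amenability yields a point `y₀` over `x₀` fixed by every loop at `x₀`.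
By transitivity every `x` is the target of an arrow `g` out of `x₀`, and `σ x := y₀ • g` does
not depend on the choice of `g`, since two such arrows differ by a loop at `x₀`. Invariance of
`σ` is then the action law, and near any point `x` local triviality writes `σ` as
`u ↦ y₀ • (g · τ u)` for a continuous local section `τ`, whence continuity.
-/

namespace TopGroupoid

variable {G₀ G₁ : Type*} [TopologicalSpace G₀] [TopologicalSpace G₁] (𝒢 : TopGroupoid G₀ G₁)

lemma comp_congr {g g' h h' : G₁} (eg : g = g') (eh : h = h')
    (p : 𝒢.t g = 𝒢.s h) (p' : 𝒢.t g' = 𝒢.s h') :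
    𝒢.comp g h p = 𝒢.comp g' h' p' := by
  subst eg eh
  rfl

lemma comp_unit_of_eq {g : G₁} {x : G₀} (p : 𝒢.t g = 𝒢.s (𝒢.unit x)) :
    𝒢.comp g (𝒢.unit x) p = g := by
  obtain rfl : 𝒢.t g = x := p.trans (𝒢.s_unit x)
  exact 𝒢.comp_unit g p

lemma eq_unit_of_comp_self {k : G₁} (p : 𝒢.t k = 𝒢.s k) (hk : 𝒢.comp k k p = k) :
    k = 𝒢.unit (𝒢.s k) := by
  have pinv : 𝒢.t k = 𝒢.s (𝒢.inv k) := (𝒢.s_inv k).symm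
  have pk : 𝒢.t k = 𝒢.s (𝒢.comp k (𝒢.inv k) pinv) := by rw [s_comp]; exact p
  calc k = 𝒢.comp k (𝒢.comp k (𝒢.inv k) pinv) pk := by
          rw [𝒢.comp_congr rfl (𝒢.comp_inv k pinv) pk (by rw [s_unit]; exact p),
            comp_unit_of_eq]
    _ = 𝒢.comp (𝒢.comp k k p) (𝒢.inv k) (by rw [t_comp]; exact pinv) :=
          (𝒢.assoc _ _ _ _ _ _ _).symm
    _ = 𝒢.comp k (𝒢.inv k) pinv := 𝒢.comp_congr hk rfl _ _
    _ = 𝒢.unit (𝒢.s k) := 𝒢.comp_inv k pinv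

lemma comp_inv_comp_cancel {g g' : G₁} (p : 𝒢.t g = 𝒢.s (𝒢.inv g'))
    (p' : 𝒢.t (𝒢.comp g (𝒢.inv g') p) = 𝒢.s g') :
    𝒢.comp (𝒢.comp g (𝒢.inv g') p) g' p' = g := by
  have htt : 𝒢.t g = 𝒢.t g' := p.trans (𝒢.s_inv g')
  have pb : 𝒢.t (𝒢.inv g') = 𝒢.s g' := 𝒢.t_inv g'
  rw [𝒢.assoc g (𝒢.inv g') g' p pb p' (by rw [s_comp, s_inv]; exact htt),
    𝒢.comp_congr rfl (𝒢.inv_comp g' pb) _ (by rw [s_unit]; exact htt), comp_unit_of_eq]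

abbrev Isotropy (x : G₀) : Type _ := {k : G₁ // 𝒢.s k = x ∧ 𝒢.t k = x}

def IsIsotropyHom {G : Type*} [Mul G] {x : G₀} (e : G → 𝒢.Isotropy x) : Prop :=
  ∀ g h : G, (e (g * h) : G₁) = 𝒢.comp (e g) (e h) ((e g).2.2.trans (e h).2.1.symm)

lemma coe_isotropy_one_eq_unit {G : Type*} [Monoid G] {x : G₀} {e : G → 𝒢.Isotropy x}
    (he : 𝒢.IsIsotropyHom e) :
    (e 1 : G₁) = 𝒢.unit x := by
  have h := he 1 1
  rw [one_mul] at h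
  rw [𝒢.eq_unit_of_comp_self _ h.symm, (e 1).2.1]

structure RightAction {Y : Type*} [TopologicalSpace Y] (ρ : Y → G₀) where
  act : (y : Y) → (g : G₁) → 𝒢.s g = ρ y → Y
  anchor_act : ∀ y g hg, ρ (act y g hg) = 𝒢.t g
  act_comp : ∀ (y : Y) (g : G₁) (hg : 𝒢.s g = ρ y) (h : G₁)
    (hh : 𝒢.t g = 𝒢.s h) (hh' : 𝒢.s h = ρ (act y g hg))
    (hgh : 𝒢.s (𝒢.comp g h hh) = ρ y),
    act (act y g hg) h hh' = act y (𝒢.comp g h hh) hgh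
  act_unit : ∀ (y : Y) (h : 𝒢.s (𝒢.unit (ρ y)) = ρ y), act y (𝒢.unit (ρ y)) h = y
  continuous_act : Continuous fun q : {q : Y × G₁ // 𝒢.s q.2 = ρ q.1} => act q.1.1 q.1.2 q.2

namespace RightAction

variable {𝒢} {Y : Type*} [TopologicalSpace Y] {ρ : Y → G₀} (A : 𝒢.RightAction ρ)

lemma act_congr {y y' : Y} {g g' : G₁} (hy : y = y') (hg : g = g')
    (p : 𝒢.s g = ρ y) (p' : 𝒢.s g' = ρ y') : A.act y g p = A.act y' g' p' := by
  subst hy hg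
  rfl

def IsIsotropyFixed (y : Y) : Prop :=
  ∀ (k : G₁) (hk : 𝒢.s k = ρ y), 𝒢.t k = ρ y → A.act y k hk = y

lemma act_eq_of_t_eq {y : Y} (hy : A.IsIsotropyFixed y) {g g' : G₁}
    (hg : 𝒢.s g = ρ y) (hg' : 𝒢.s g' = ρ y) (htt : 𝒢.t g = 𝒢.t g') :
    A.act y g hg = A.act y g' hg' := by
  have p : 𝒢.t g = 𝒢.s (𝒢.inv g') := htt.trans (𝒢.s_inv g').symm
  set k := 𝒢.comp g (𝒢.inv g') p
  have hks : 𝒢.s k = ρ y := (𝒢.s_comp _ _ _).trans hg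
  have hkt : 𝒢.t k = 𝒢.s g' := (𝒢.t_comp _ _ _).trans (𝒢.t_inv g')
  have hfix : A.act y k hks = y := hy k hks (hkt.trans hg')
  calc A.act y g hg = A.act y (𝒢.comp k g' hkt) ((𝒢.s_comp _ _ _).trans hks) :=
        A.act_congr rfl (𝒢.comp_inv_comp_cancel p hkt).symm _ _
    _ = A.act (A.act y k hks) g' (hg'.trans (congrArg ρ hfix).symm) :=
        (A.act_comp _ _ _ _ _ _ _).symm
    _ = A.act y g' hg' := A.act_congr hfix rfl _ _

section FiberAction

variable {G : Type*} [Group G] [TopologicalSpace G] {x : G₀}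
  (e : G ≃ₜ 𝒢.Isotropy x)

/-- The inverse turns the right action of the isotropy group into a left action of `G`. -/
def fiberAction (g : G) (y : {y : Y // ρ y = x}) : {y : Y // ρ y = x} :=
  ⟨A.act y (e g⁻¹) ((e g⁻¹).2.1.trans y.2.symm), (A.anchor_act _ _ _).trans (e g⁻¹).2.2⟩

lemma continuous_fiberAction [ContinuousInv G] :
    Continuous fun q : G × {y : Y // ρ y = x} => A.fiberAction e q.1 q.2 := by
  have hpair : Continuous fun q : G × {y : Y // ρ y = x} => (q.2.1, (e q.1⁻¹ : G₁)) :=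
    (continuous_subtype_val.comp continuous_snd).prodMk
      (continuous_subtype_val.comp (e.continuous.comp continuous_fst.inv))
  exact (A.continuous_act.comp
    (hpair.subtype_mk fun q => (e q.1⁻¹).2.1.trans q.2.2.symm)).subtype_mk _

lemma fiberAction_one (he : 𝒢.IsIsotropyHom e)
    (y : {y : Y // ρ y = x}) : A.fiberAction e 1 y = y := by
  have hunit : (e 1⁻¹ : G₁) = 𝒢.unit (ρ y) := by
    rw [inv_one, 𝒢.coe_isotropy_one_eq_unit he, y.2]
  exact Subtype.ext ((A.act_congr rfl hunit _ (𝒢.s_unit _)).trans (A.act_unit _ _))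

lemma fiberAction_mul (he : 𝒢.IsIsotropyHom e)
    (g h : G) (y : {y : Y // ρ y = x}) :
    A.fiberAction e (g * h) y = A.fiberAction e g (A.fiberAction e h y) := by
  refine Subtype.ext ((A.act_congr rfl (by rw [mul_inv_rev]; exact he _ _) _
    ((𝒢.s_comp _ _ _).trans ?_)).trans (A.act_comp _ _ _ _ _ _ _).symm)
  exact (e h⁻¹).2.1.trans y.2.symm

end FiberAction

end RightAction

variable {𝒢}

theorem RightAction.exists_isIsotropyFixed {G : Type*} [Group G] [TopologicalSpace G]
    [ContinuousInv G] {x : G₀} {Y : Type u} [TopologicalSpace Y] [T2Space Y] {ρ : Y → G₀}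
    (A : 𝒢.RightAction ρ) (hEA : ExtremelyAmenable.{u} G)
    (e : G ≃ₜ 𝒢.Isotropy x)
    (he : 𝒢.IsIsotropyHom e)
    (hcpt : IsCompact {y | ρ y = x}) (hne : ∃ y, ρ y = x) :
    ∃ y, ρ y = x ∧ A.IsIsotropyFixed y := by
  have : CompactSpace {y // ρ y = x} := isCompact_iff_compactSpace.mp hcpt
  obtain ⟨y₁, hy₁⟩ := hne
  have : Nonempty {y // ρ y = x} := ⟨⟨y₁, hy₁⟩⟩
  obtain ⟨y, hy⟩ := hEA _ (A.fiberAction e) (A.continuous_fiberAction e)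
    (A.fiberAction_one e he) (A.fiberAction_mul e he)
  refine ⟨y, y.2, fun k hks hkt => ?_⟩
  have hk : (e (e.symm ⟨k, hks.trans y.2, hkt.trans y.2⟩)⁻¹⁻¹ : G₁) = k := by simp
  exact (A.act_congr rfl hk.symm _ _).trans (congrArg Subtype.val (hy _))

namespace RightAction

variable {Y : Type*} [TopologicalSpace Y] {ρ : Y → G₀} (A : 𝒢.RightAction ρ)
  (htr : 𝒢.Transitive) (y₀ : Y)

noncomputable def orbitSection (x : G₀) : Y :=
  A.act y₀ (htr (ρ y₀) x).choose (htr (ρ y₀) x).choose_spec.1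

lemma anchor_orbitSection (x : G₀) : ρ (A.orbitSection htr y₀ x) = x :=
  (A.anchor_act _ _ _).trans (htr (ρ y₀) x).choose_spec.2

variable {y₀}

lemma orbitSection_t_eq_act (hy₀ : A.IsIsotropyFixed y₀) {g : G₁} (hg : 𝒢.s g = ρ y₀) :
    A.orbitSection htr y₀ (𝒢.t g) = A.act y₀ g hg :=
  A.act_eq_of_t_eq hy₀ _ _ (htr _ _).choose_spec.2

lemma act_orbitSection (hy₀ : A.IsIsotropyFixed y₀) (g : G₁)
    (hg : 𝒢.s g = ρ (A.orbitSection htr y₀ (𝒢.s g))) :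
    A.act (A.orbitSection htr y₀ (𝒢.s g)) g hg = A.orbitSection htr y₀ (𝒢.t g) := by
  obtain ⟨has, hat⟩ := (htr (ρ y₀) (𝒢.s g)).choose_spec
  calc A.act (A.orbitSection htr y₀ (𝒢.s g)) g hg
      = A.act y₀ (𝒢.comp _ g hat) ((𝒢.s_comp _ _ _).trans has) := A.act_comp _ _ _ _ _ _ _
    _ = A.orbitSection htr y₀ (𝒢.t (𝒢.comp _ g hat)) :=
        (A.orbitSection_t_eq_act htr hy₀ _).symm
    _ = A.orbitSection htr y₀ (𝒢.t g) := by rw [𝒢.t_comp]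

lemma continuous_orbitSection (hy₀ : A.IsIsotropyFixed y₀) (hlt : 𝒢.LocallyTrivial) :
    Continuous (A.orbitSection htr y₀) := by
  refine continuous_iff_continuousAt.2 fun x => ?_
  obtain ⟨U, hUo, hxU, τ, hτc, hτ⟩ := hlt x
  obtain ⟨has, hat⟩ := (htr (ρ y₀) x).choose_spec
  have p : ∀ u : U, 𝒢.t (htr (ρ y₀) x).choose = 𝒢.s (τ u) := fun u =>
    hat.trans (hτ u u.2).2.symm
  have hs : ∀ u : U, 𝒢.s (𝒢.comp _ (τ u) (p u)) = ρ y₀ := fun u => (𝒢.s_comp _ _ _).trans has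
  have hlocal : U.domRestrict (A.orbitSection htr y₀) = fun u => A.act y₀ _ (hs u) := by
    funext u
    have h := A.orbitSection_t_eq_act htr hy₀ (hs u)
    rwa [𝒢.t_comp, (hτ u u.2).1] at h
  have hcomp : Continuous fun u : U => 𝒢.comp _ (τ u) (p u) :=
    𝒢.cont_comp.comp ((continuous_const.prodMk hτc.domRestrict).subtype_mk p)
  have hon : ContinuousOn (A.orbitSection htr y₀) U := by
    rw [continuousOn_iff_continuous_domRestrict, hlocal]
    exact A.continuous_act.comp ((continuous_const.prodMk hcomp).subtype_mk hs)
  exact hon.continuousAt (hUo.mem_nhds hxU)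

end RightAction

end TopGroupoid

theorem extremely_amenable_gives_invariant_section_general {G : Type u} [Group G]
    [TopologicalSpace G] [IsTopologicalGroup G]
    {G₀ G₁ Y : Type u} [TopologicalSpace G₀] [TopologicalSpace G₁]
    [TopologicalSpace Y] [T2Space Y]
    (hEA : ExtremelyAmenable.{u} G)
    (𝒢 : TopGroupoid G₀ G₁) (hlt : 𝒢.LocallyTrivial) (htr : 𝒢.Transitive)
    (hiso : ∀ x : G₀, ∃ e : G ≃ₜ {k : G₁ // 𝒢.s k = x ∧ 𝒢.t k = x},
      ∀ g h : G, ((e (g * h) : {k : G₁ // 𝒢.s k = x ∧ 𝒢.t k = x}) : G₁)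
        = 𝒢.comp ((e g : {k : G₁ // 𝒢.s k = x ∧ 𝒢.t k = x}) : G₁)
            ((e h : {k : G₁ // 𝒢.s k = x ∧ 𝒢.t k = x}) : G₁)
            ((e g).2.2.trans (e h).2.1.symm))
    (ρ : Y → G₀)
    (hρproper : IsProperMap ρ) (hρsurj : Function.Surjective ρ)
    (act : (y : Y) → (g : G₁) → 𝒢.s g = ρ y → Y)
    (hρa : ∀ y g hg, ρ (act y g hg) = 𝒢.t g)
    (hacomp : ∀ (y : Y) (g : G₁) (hg : 𝒢.s g = ρ y) (h : G₁)
      (hh : 𝒢.t g = 𝒢.s h) (hh' : 𝒢.s h = ρ (act y g hg))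
      (hgh : 𝒢.s (𝒢.comp g h hh) = ρ y),
      act (act y g hg) h hh' = act y (𝒢.comp g h hh) hgh)
    (haunit : ∀ (y : Y) (h : 𝒢.s (𝒢.unit (ρ y)) = ρ y),
      act y (𝒢.unit (ρ y)) h = y)
    (hacont : Continuous fun q : {q : Y × G₁ // 𝒢.s q.2 = ρ q.1} =>
      act q.1.1 q.1.2 q.2) :
    ∃ σ : G₀ → Y, Continuous σ ∧ (∀ x, ρ (σ x) = x) ∧
      ∀ (g : G₁) (hg : 𝒢.s g = ρ (σ (𝒢.s g))),
        act (σ (𝒢.s g)) g hg = σ (𝒢.t g) := by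
  let A : 𝒢.RightAction ρ := ⟨act, hρa, hacomp, haunit, hacont⟩
  rcases isEmpty_or_nonempty G₀ with hG₀ | ⟨⟨x₀⟩⟩
  · exact ⟨isEmptyElim, continuous_of_discreteTopology, isEmptyElim,
      fun g => (IsEmpty.false (𝒢.s g)).elim⟩
  obtain ⟨e, he⟩ := hiso x₀
  obtain ⟨y₀, -, hy₀⟩ := A.exists_isIsotropyFixed hEA e he
    (hρproper.isCompact_preimage isCompact_singleton) (hρsurj x₀)
  exact ⟨A.orbitSection htr y₀, A.continuous_orbitSection htr hy₀ hlt,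
    A.anchor_orbitSection htr y₀, A.act_orbitSection htr hy₀⟩

/-- Let `G` be extremely amenable, `𝒢 = (G₀, G₁)` a locally trivial transitive
topological groupoid whose isotropy groups are (topologically) isomorphic to `G`, and
`act` a continuous right action of `𝒢` on `Y` with proper surjective anchor
`ρ : Y → G₀`.  Then there is a continuous `𝒢`-invariant section `σ : G₀ → Y` of `ρ`:
`ρ ∘ σ = id` and `σ(t g) = σ(s g)•g` for every arrow `g`. -/
theorem extremely_amenable_gives_invariant_section {G : Type u} [Group G]
    [TopologicalSpace G] [IsTopologicalGroup G]
    {G₀ G₁ Y : Type u} [TopologicalSpace G₀] [TopologicalSpace G₁]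
    [TopologicalSpace Y] [T2Space G₀] [T2Space G₁] [T2Space Y]
    (hEA : ExtremelyAmenable.{u} G)
    (𝒢 : TopGroupoid G₀ G₁) (hlt : 𝒢.LocallyTrivial) (htr : 𝒢.Transitive)
    (hiso : ∀ x : G₀, ∃ e : G ≃ₜ {k : G₁ // 𝒢.s k = x ∧ 𝒢.t k = x},
      ∀ g h : G, ((e (g * h) : {k : G₁ // 𝒢.s k = x ∧ 𝒢.t k = x}) : G₁)
        = 𝒢.comp ((e g : {k : G₁ // 𝒢.s k = x ∧ 𝒢.t k = x}) : G₁)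
            ((e h : {k : G₁ // 𝒢.s k = x ∧ 𝒢.t k = x}) : G₁)
            ((e g).2.2.trans (e h).2.1.symm))
    (ρ : Y → G₀) (hρc : Continuous ρ)
    (hρproper : IsProperMap ρ) (hρsurj : Function.Surjective ρ)
    (act : (y : Y) → (g : G₁) → 𝒢.s g = ρ y → Y)
    (hρa : ∀ y g hg, ρ (act y g hg) = 𝒢.t g)
    (hacomp : ∀ (y : Y) (g : G₁) (hg : 𝒢.s g = ρ y) (h : G₁)
      (hh : 𝒢.t g = 𝒢.s h) (hh' : 𝒢.s h = ρ (act y g hg))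
      (hgh : 𝒢.s (𝒢.comp g h hh) = ρ y),
      act (act y g hg) h hh' = act y (𝒢.comp g h hh) hgh)
    (haunit : ∀ (y : Y) (h : 𝒢.s (𝒢.unit (ρ y)) = ρ y),
      act y (𝒢.unit (ρ y)) h = y)
    (hacont : Continuous fun q : {q : Y × G₁ // 𝒢.s q.2 = ρ q.1} =>
      act q.1.1 q.1.2 q.2) :
    ∃ σ : G₀ → Y, Continuous σ ∧ (∀ x, ρ (σ x) = x) ∧
      ∀ (g : G₁) (hg : 𝒢.s g = ρ (σ (𝒢.s g))),
        act (σ (𝒢.s g)) g hg = σ (𝒢.t g) :=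
  extremely_amenable_gives_invariant_section_general hEA 𝒢 hlt htr hiso ρ hρproper hρsurj act hρa
    hacomp haunit hacont
end
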